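/- arXiv:2110.00852 — 4 statements merged into one kernel-verified Lean document; each statement's English description precedes it below -/
import Mathlib

section
/- Let 𝒳 ∈ ℂ^{n×p}, 𝒴 ∈ ℂ^n, W ∈ ℂ^p, λ > 0, and suppose λ ≥ (2/n)‖𝒳^H(𝒴 − 𝒳W)‖_∞. Let Ŵ be any minimizer of F(β) = (1/(2n))‖𝒴 − 𝒳β‖₂² + λ‖β‖₁ over β ∈ ℂ^p, and set Δ̂ = Ŵ − W. Let M = {v ∈ ℂ^p : v[j] = 0 whenever W[j] = 0} and M^⊥ = {v : v[j] = 0 whenever W[j] ≠ 0}. Then ‖Δ̂_{M^⊥}‖₁ ≤ 3‖Δ̂_M‖₁, where Δ̂_M and Δ̂_{M^⊥} are the coordinate projections of Δ̂ onto the support and off-support of W. -/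
open Matrix Finset

/-!
Write `Δ = Ŵ - W`. Expanding the square, the drop of the least-squares loss from `W` to `Ŵ` is at
most `(1/n) Re ⟪𝒳ᴴ(𝒴 - 𝒳W), Δ⟫ ≤ (λ/2)‖Δ‖₁`, while by decomposability of the `ℓ¹` norm along the
support of `W`, the increase of the penalty is at least `λ(‖Δ_{M^⊥}‖₁ - ‖Δ_M‖₁)`. Optimality of `Ŵ`
forces the penalty increase to be paid for by the loss drop, so
`‖Δ_{M^⊥}‖₁ - ‖Δ_M‖₁ ≤ (‖Δ_{M^⊥}‖₁ + ‖Δ_M‖₁) / 2`.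
-/

section LeastSquares

variable {m ι 𝕜 : Type*} [Fintype m] [Fintype ι] [RCLike 𝕜]

theorem sum_norm_sq_sub_sum_norm_sub_sq_le (r s : m → 𝕜) :
    ∑ i, ‖r i‖ ^ 2 - ∑ i, ‖(r - s) i‖ ^ 2 ≤ 2 * RCLike.re (star r ⬝ᵥ s) := by
  have hexpand : ∀ i, ‖(r - s) i‖ ^ 2 = ‖r i‖ ^ 2 - 2 * RCLike.re (star (r i) * s i) + ‖s i‖ ^ 2 :=
    fun i => by rw [Pi.sub_apply, @norm_sub_sq 𝕜, RCLike.inner_apply']; rfl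
  have hre : RCLike.re (star r ⬝ᵥ s) = ∑ i, RCLike.re (star (r i) * s i) := by
    simp only [dotProduct, Pi.star_apply, map_sum]
  simp only [hexpand, sum_add_distrib, sum_sub_distrib, ← mul_sum, hre]
  linarith [sum_nonneg fun i (_ : i ∈ univ) => sq_nonneg ‖s i‖]

theorem re_star_dotProduct_le_sum_norm_mul_norm (g v : ι → 𝕜) :
    RCLike.re (star g ⬝ᵥ v) ≤ ∑ j, ‖g j‖ * ‖v j‖ := by
  simp only [dotProduct, Pi.star_apply, map_sum]
  gcongr with j
  calc RCLike.re (star (g j) * v j) ≤ ‖star (g j) * v j‖ := RCLike.re_le_norm _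
    _ = ‖g j‖ * ‖v j‖ := by rw [norm_mul, norm_star]

noncomputable def leastSquaresLoss {n : ℕ} (X : Matrix (Fin n) ι 𝕜) (Y : Fin n → 𝕜)
    (β : ι → 𝕜) : ℝ :=
  (1 / (2 * n)) * ∑ i, ‖(Y - X *ᵥ β) i‖ ^ 2

theorem leastSquaresLoss_sub_le {n : ℕ} (X : Matrix (Fin n) ι 𝕜) (Y : Fin n → 𝕜) (W V : ι → 𝕜)
    {lam : ℝ} (hlam : ∀ j, (2 / n) * ‖(Xᴴ *ᵥ (Y - X *ᵥ W)) j‖ ≤ lam) :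
    leastSquaresLoss X Y W - leastSquaresLoss X Y V ≤ lam / 2 * ∑ j, ‖V j - W j‖ := by
  set r := Y - X *ᵥ W
  set g := Xᴴ *ᵥ r
  have hres : Y - X *ᵥ V = r - X *ᵥ (V - W) := by rw [mulVec_sub]; simp only [r]; abel
  have hadj : star r ⬝ᵥ X *ᵥ (V - W) = star g ⬝ᵥ (V - W) := by
    rw [dotProduct_mulVec, star_mulVec, conjTranspose_conjTranspose]
  have hdrop := sum_norm_sq_sub_sum_norm_sub_sq_le r (X *ᵥ (V - W))
  have hcs := re_star_dotProduct_le_sum_norm_mul_norm g (V - W)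
  calc leastSquaresLoss X Y W - leastSquaresLoss X Y V
      = (1 / (2 * n)) * (∑ i, ‖r i‖ ^ 2 - ∑ i, ‖(r - X *ᵥ (V - W)) i‖ ^ 2) := by
        rw [leastSquaresLoss, leastSquaresLoss, hres]; ring
    _ ≤ (1 / (2 * n)) * (2 * ∑ j, ‖g j‖ * ‖(V - W) j‖) := by
        gcongr
        rw [hadj] at hdrop
        linarith
    _ = ∑ j, (2 / n * ‖g j‖) / 2 * ‖V j - W j‖ := by
        rw [mul_sum, mul_sum]
        congr! 1 with j
        rw [Pi.sub_apply]
        ring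
    _ ≤ ∑ j, lam / 2 * ‖V j - W j‖ := by gcongr with j; exact hlam j
    _ = lam / 2 * ∑ j, ‖V j - W j‖ := (mul_sum ..).symm

end LeastSquares

theorem sum_norm_sub_off_support_sub_on_support_le {ι E : Type*} [Fintype ι]
    [SeminormedAddCommGroup E] (V W : ι → E) [DecidablePred fun j => W j = 0] :
    ∑ j ∈ univ.filter (fun j => W j = 0), ‖V j - W j‖
        - ∑ j ∈ univ.filter (fun j => W j ≠ 0), ‖V j - W j‖
      ≤ ∑ j, ‖V j‖ - ∑ j, ‖W j‖ := by
  calc _ = ∑ j, if W j = 0 then ‖V j - W j‖ else -‖V j - W j‖ := by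
        rw [sum_ite, sum_neg_distrib, sub_eq_add_neg]
    _ ≤ ∑ j, (‖V j‖ - ‖W j‖) := by
        gcongr with j
        split_ifs with hW
        · simp [hW]
        · linarith [norm_sub_norm_le (W j) (V j), norm_sub_rev (V j) (W j)]
    _ = _ := sum_sub_distrib ..

theorem stmt_3_general (n p : ℕ)
    (X : Matrix (Fin n) (Fin p) ℂ) (Y : Fin n → ℂ) (W : Fin p → ℂ)
    (lam : ℝ) (hlam : 0 < lam)
    (hlam_ge : ∀ j : Fin p, (2 / n) * ‖(Xᴴ.mulVec (Y - X.mulVec W)) j‖ ≤ lam)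
    (What : Fin p → ℂ)
    (hmin : ∀ β : Fin p → ℂ,
      (1 / (2 * n)) * ∑ i, ‖(Y - X.mulVec What) i‖ ^ 2 + lam * ∑ j, ‖What j‖ ≤
      (1 / (2 * n)) * ∑ i, ‖(Y - X.mulVec β) i‖ ^ 2 + lam * ∑ j, ‖β j‖) :
    ∑ j ∈ univ.filter (fun j => W j = 0), ‖What j - W j‖ ≤
      3 * ∑ j ∈ univ.filter (fun j => W j ≠ 0), ‖What j - W j‖ := by
  set offSupport := ∑ j ∈ univ.filter (fun j => W j = 0), ‖What j - W j‖
  set onSupport := ∑ j ∈ univ.filter (fun j => W j ≠ 0), ‖What j - W j‖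
  have hopt : leastSquaresLoss X Y What + lam * ∑ j, ‖What j‖ ≤
      leastSquaresLoss X Y W + lam * ∑ j, ‖W j‖ := hmin W
  have hloss := leastSquaresLoss_sub_le X Y W What hlam_ge
  have hsplit : ∑ j, ‖What j - W j‖ = offSupport + onSupport :=
    (sum_filter_add_sum_filter_not _ _ _).symm
  have hpenalty : lam * (offSupport - onSupport) ≤ lam * (∑ j, ‖What j‖ - ∑ j, ‖W j‖) :=
    mul_le_mul_of_nonneg_left (sum_norm_sub_off_support_sub_on_support_le What W) hlam.le
  have hbasic : lam * (offSupport - 3 * onSupport) ≤ 0 := by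
    rw [hsplit] at hloss
    linarith
  linarith [nonpos_of_mul_nonpos_right hbasic hlam]

theorem stmt_3 (n p : ℕ) (hn : 0 < n)
    (X : Matrix (Fin n) (Fin p) ℂ) (Y : Fin n → ℂ) (W : Fin p → ℂ)
    (lam : ℝ) (hlam : 0 < lam)
    (hlam_ge : ∀ j : Fin p, (2 / n) * ‖(Xᴴ.mulVec (Y - X.mulVec W)) j‖ ≤ lam)
    (What : Fin p → ℂ)
    (hmin : ∀ β : Fin p → ℂ,
      (1 / (2 * n)) * ∑ i, ‖(Y - X.mulVec What) i‖ ^ 2 + lam * ∑ j, ‖What j‖ ≤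
      (1 / (2 * n)) * ∑ i, ‖(Y - X.mulVec β) i‖ ^ 2 + lam * ∑ j, ‖β j‖) :
    ∑ j ∈ univ.filter (fun j => W j = 0), ‖What j - W j‖ ≤
      3 * ∑ j ∈ univ.filter (fun j => W j ≠ 0), ‖What j - W j‖ :=
  stmt_3_general n p X Y W lam hlam hlam_ge What hmin
end

section
/- Let 𝒳 ∈ ℂ^{n×p}, 𝒴 ∈ ℂ^n, W ∈ ℂ^p with support of size at most d, and λ, κ > 0. Suppose (i) λ ≥ (2/n)‖𝒳^H(𝒴 − 𝒳W)‖_∞ and (ii) (1/n)‖𝒳Δ‖₂² ≥ κ‖Δ‖₂² for all Δ in the cone D = {Δ ∈ ℂ^p : ‖Δ_{M^⊥}‖₁ ≤ 3‖Δ_M‖₁}, where M is the support subspace of W. Then any minimizer Ŵ of (1/(2n))‖𝒴 − 𝒳β‖₂² + λ‖β‖₁ satisfies ‖Ŵ − W‖₂ ≤ (3/κ)λ√d. -/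
/-!
Put `Δ = Ŵ - W`. Comparing the objective at `Ŵ` and at `W` (the basic inequality), the cross
term `Re ⟨Xᴴ (Y - X W), Δ⟩` is at most `(nλ/2) ‖Δ‖₁` by (i), and decomposability of the `ℓ¹` norm
over the support of `W` gives `‖W‖₁ - ‖Ŵ‖₁ ≤ ‖Δ_M‖₁ - ‖Δ_{M⊥}‖₁`. Together,
`(1/n) ‖X Δ‖₂² ≤ λ (3 ‖Δ_M‖₁ - ‖Δ_{M⊥}‖₁)`. The left side is nonnegative, so `Δ` lies in the
cone, and (ii) yields `κ ‖Δ‖₂² ≤ 3 λ ‖Δ_M‖₁ ≤ 3 λ √d ‖Δ‖₂`.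
-/

open Matrix Finset

section Lasso

variable {𝕜 m ι : Type*} [RCLike 𝕜] [Fintype m] [Fintype ι]

theorem sum_norm_sub_sq (a b : m → 𝕜) :
    ∑ i, ‖(a - b) i‖ ^ 2 = ∑ i, ‖a i‖ ^ 2 - 2 * RCLike.re (b ⬝ᵥ star a) + ∑ i, ‖b i‖ ^ 2 := by
  simpa only [EuclideanSpace.norm_sq_eq, EuclideanSpace.inner_toLp_toLp, ← WithLp.toLp_sub] using
    norm_sub_sq (𝕜 := 𝕜) (WithLp.toLp 2 a) (WithLp.toLp 2 b)

theorem mulVec_dotProduct_star (X : Matrix m ι 𝕜) (v : ι → 𝕜) (r : m → 𝕜) :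
    X *ᵥ v ⬝ᵥ star r = v ⬝ᵥ star (Xᴴ *ᵥ r) := by
  rw [star_mulVec, conjTranspose_conjTranspose, dotProduct_comm, dotProduct_mulVec,
    dotProduct_comm]

theorem re_dotProduct_star_le {v g : ι → 𝕜} {c : ℝ} (hg : ∀ j, ‖g j‖ ≤ c) :
    RCLike.re (v ⬝ᵥ star g) ≤ c * ∑ j, ‖v j‖ := by
  rw [dotProduct, map_sum, mul_sum]
  refine sum_le_sum fun j _ => ?_
  calc RCLike.re (v j * star (g j)) ≤ ‖v j * star (g j)‖ := RCLike.re_le_norm _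
    _ = ‖g j‖ * ‖v j‖ := by rw [norm_mul, norm_star, mul_comm]
    _ ≤ c * ‖v j‖ := by gcongr; exact hg j

theorem sum_norm_le_sqrt_mul_sqrt_sum_sq {s : Finset ι} {d : ℕ} (hs : #s ≤ d) (v : ι → 𝕜) :
    ∑ j ∈ s, ‖v j‖ ≤ √d * √(∑ j, ‖v j‖ ^ 2) := by
  rw [← Real.sqrt_mul (Nat.cast_nonneg d)]
  refine Real.le_sqrt_of_sq_le ((sq_sum_le_card_mul_sum_sq ..).trans ?_)
  gcongr
  exact subset_univ s

theorem sum_norm_sub_sum_norm_add_le [DecidableEq 𝕜] (W Δ : ι → 𝕜) :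
    ∑ j, ‖W j‖ - ∑ j, ‖(W + Δ) j‖ ≤
      ∑ j ∈ univ.filter (fun j => W j ≠ 0), ‖Δ j‖ - ∑ j ∈ univ.filter (fun j => W j = 0), ‖Δ j‖ := by
  rw [← sum_sub_distrib, ← sum_filter_add_sum_filter_not univ (fun j => W j ≠ 0)]
  simp only [not_not]
  rw [sub_eq_add_neg, ← sum_neg_distrib]
  refine add_le_add (sum_le_sum fun j _ => ?_) (sum_le_sum fun j hj => ?_)
  · simpa using norm_sub_norm_le (W j) (W j + Δ j)
  · simp [(mem_filter.mp hj).2]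

noncomputable def lassoObjective (X : Matrix m ι 𝕜) (Y : m → 𝕜) (n : ℕ) (lam : ℝ)
    (β : ι → 𝕜) : ℝ :=
  (1 / (2 * n)) * ∑ i, ‖(Y - X *ᵥ β) i‖ ^ 2 + lam * ∑ j, ‖β j‖

theorem sum_norm_mulVec_sq_le_of_lassoObjective_le {n : ℕ} (hn : 0 < n) {X : Matrix m ι 𝕜}
    {Y : m → 𝕜} {lam : ℝ} {W Δ : ι → 𝕜}
    (h : lassoObjective X Y n lam (W + Δ) ≤ lassoObjective X Y n lam W) :
    ∑ i, ‖(X *ᵥ Δ) i‖ ^ 2 ≤ 2 * RCLike.re (Δ ⬝ᵥ star (Xᴴ *ᵥ (Y - X *ᵥ W))) +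
      2 * n * lam * (∑ j, ‖W j‖ - ∑ j, ‖(W + Δ) j‖) := by
  rw [lassoObjective, lassoObjective, mulVec_add, ← sub_sub, sum_norm_sub_sq,
    mulVec_dotProduct_star] at h
  have hn' : (0 : ℝ) < n := by exact_mod_cast hn
  field_simp at h
  linarith

theorem lasso_prediction_error_le [DecidableEq 𝕜] {n : ℕ} (hn : 0 < n) {X : Matrix m ι 𝕜}
    {Y : m → 𝕜} {lam : ℝ} (hlam : 0 ≤ lam) {W Δ : ι → 𝕜}
    (hlam_ge : ∀ j, (2 / n) * ‖(Xᴴ *ᵥ (Y - X *ᵥ W)) j‖ ≤ lam)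
    (h : lassoObjective X Y n lam (W + Δ) ≤ lassoObjective X Y n lam W) :
    (1 / n) * ∑ i, ‖(X *ᵥ Δ) i‖ ^ 2 ≤ lam *
      (3 * ∑ j ∈ univ.filter (fun j => W j ≠ 0), ‖Δ j‖ -
        ∑ j ∈ univ.filter (fun j => W j = 0), ‖Δ j‖) := by
  have hn' : (0 : ℝ) < n := by exact_mod_cast hn
  have hgrad : ∀ j, ‖(Xᴴ *ᵥ (Y - X *ᵥ W)) j‖ ≤ n * lam / 2 := fun j => by
    have := hlam_ge j
    rw [le_div_iff₀ two_pos]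
    field_simp at this
    linarith
  have hbasic := sum_norm_mulVec_sq_le_of_lassoObjective_le hn h
  have hcross := re_dotProduct_star_le (v := Δ) hgrad
  rw [← sum_filter_add_sum_filter_not univ (fun j => W j ≠ 0)] at hcross
  simp only [not_not] at hcross
  have hdecomp := mul_le_mul_of_nonneg_left (sum_norm_sub_sum_norm_add_le W Δ)
    (by positivity : (0 : ℝ) ≤ 2 * n * lam)
  rw [div_mul_eq_mul_div, one_mul, div_le_iff₀ hn']
  linarith

end Lasso

theorem le_div_of_mul_sq_le_mul {t a κ : ℝ} (ht : 0 ≤ t) (ha : 0 ≤ a) (hκ : 0 < κ)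
    (h : κ * t ^ 2 ≤ a * t) : t ≤ a / κ := by
  rw [le_div_iff₀ hκ]
  rcases ht.eq_or_lt with rfl | ht
  · simpa using ha
  · exact le_of_mul_le_mul_right (by linarith) ht

theorem stmt_4 (n p d : ℕ) (hn : 0 < n)
    (X : Matrix (Fin n) (Fin p) ℂ) (Y : Fin n → ℂ) (W : Fin p → ℂ)
    (hsupp : (univ.filter (fun j => W j ≠ 0)).card ≤ d)
    (lam κ : ℝ) (hlam : 0 < lam) (hκ : 0 < κ)
    (hlam_ge : ∀ j : Fin p, (2 / n) * ‖(Xᴴ.mulVec (Y - X.mulVec W)) j‖ ≤ lam)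
    (hRE : ∀ Δ : Fin p → ℂ,
      (∑ j ∈ univ.filter (fun j => W j = 0), ‖Δ j‖ ≤
        3 * ∑ j ∈ univ.filter (fun j => W j ≠ 0), ‖Δ j‖) →
      κ * ∑ j, ‖Δ j‖ ^ 2 ≤ (1 / n) * ∑ i, ‖(X.mulVec Δ) i‖ ^ 2)
    (What : Fin p → ℂ)
    (hmin : ∀ β : Fin p → ℂ,
      (1 / (2 * n)) * ∑ i, ‖(Y - X.mulVec What) i‖ ^ 2 + lam * ∑ j, ‖What j‖ ≤
      (1 / (2 * n)) * ∑ i, ‖(Y - X.mulVec β) i‖ ^ 2 + lam * ∑ j, ‖β j‖) :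
    Real.sqrt (∑ j, ‖What j - W j‖ ^ 2) ≤ (3 / κ) * lam * Real.sqrt d := by
  set Δ := What - W
  set S := univ.filter (fun j => W j ≠ 0)
  set Sc := univ.filter (fun j => W j = 0)
  set B := ∑ j, ‖Δ j‖ ^ 2
  have hpred : 1 / n * ∑ i, ‖(X *ᵥ Δ) i‖ ^ 2 ≤ lam * (3 * ∑ j ∈ S, ‖Δ j‖ - ∑ j ∈ Sc, ‖Δ j‖) :=
    lasso_prediction_error_le hn hlam.le hlam_ge (by rw [add_sub_cancel]; exact hmin W)
  have hcone : ∑ j ∈ Sc, ‖Δ j‖ ≤ 3 * ∑ j ∈ S, ‖Δ j‖ :=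
    sub_nonneg.mp <| (mul_nonneg_iff_of_pos_left hlam).mp <| hpred.trans' (by positivity)
  have hκB : κ * √B ^ 2 ≤ 3 * lam * √d * √B := by
    rw [Real.sq_sqrt (by positivity)]
    calc κ * B ≤ 1 / n * ∑ i, ‖(X *ᵥ Δ) i‖ ^ 2 := hRE Δ hcone
      _ ≤ lam * (3 * ∑ j ∈ S, ‖Δ j‖ - ∑ j ∈ Sc, ‖Δ j‖) := hpred
      _ ≤ lam * (3 * (√d * √B)) := by
        have hSc : 0 ≤ ∑ j ∈ Sc, ‖Δ j‖ := by positivity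
        gcongr
        linarith [sum_norm_le_sqrt_mul_sqrt_sum_sq hsupp Δ]
      _ = 3 * lam * √d * √B := by ring
  exact (le_div_of_mul_sq_le_mul (by positivity) (by positivity) hκ hκB).trans_eq (by ring)
end

section
/- Let δ > 1, C > 0, and N a positive integer. Define B(k) = (1/N) ∑_{q=-(N-1)}^{N-1} (N − |q|) C δ^{-|q + kN|} for integers k ≠ 0. Then ∑_{k ∈ ℤ, k ≠ 0} B(k) ≤ 2 ∑_{k=1}^∞ B(k) and this sum converges with ∑_{k ∈ ℤ, k ≠ 0} B(k) ≤ 2C/(δ − 1). -/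
/-!
`B` is even, and for `k ≥ 1` every exponent `|q - k N|` equals `k N - q`, so
`B (-k) = (C / N) F δ^(-k N)` with `F = ∑_{|q| < N} (N - |q|) δ^q`. Hence the one-sided sum is
geometric, `∑_{k ≥ 1} B k = C F / (N (δ^N - 1))`, and the two-sided sum is twice that.
Pairing `q - N` with `q` (their weights add up to `N`, and `δ^(q - N) ≤ δ^q`) gives
`F ≤ N ∑_{j < N} δ^j = N (δ^N - 1) / (δ - 1)`, so `∑_{k ≥ 1} B k ≤ C / (δ - 1)`.
-/

open Finset

theorem Int.sum_Ico_neg_self {M : Type*} [AddCommMonoid M] (f : ℤ → M) {n : ℤ} (hn : 0 ≤ n) :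
    ∑ q ∈ Ico (-n) n, f q = ∑ q ∈ Ico 0 n, (f (q - n) + f q) := by
  rw [← Ico_union_Ico_eq_Ico (by omega) hn, sum_union (Ico_disjoint_Ico_consecutive _ _ _),
    sum_add_distrib]
  congr 1
  simpa [sub_eq_add_neg] using (sum_Ico_add' f 0 n (-n)).symm

theorem Int.sum_Ico_zero_natCast {M : Type*} [AddCommMonoid M] (f : ℤ → M) (n : ℕ) :
    ∑ q ∈ Ico (0 : ℤ) n, f q = ∑ j ∈ Finset.range n, f j := by
  simp [Int.Ico_eq_finset_map, sum_map]

theorem sum_Icc_sub_abs_mul_le (N : ℕ) {g : ℤ → ℝ} (hg : ∀ q, 0 ≤ q → g (q - N) ≤ g q) :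
    ∑ q ∈ Icc (-((N : ℤ) - 1)) ((N : ℤ) - 1), ((N : ℝ) - |q|) * g q ≤ N * ∑ j ∈ range N, g j := by
  have hext : ∑ q ∈ Icc (-((N : ℤ) - 1)) ((N : ℤ) - 1), ((N : ℝ) - |q|) * g q
      = ∑ q ∈ Ico (-(N : ℤ)) N, ((N : ℝ) - |q|) * g q := by
    refine sum_subset (fun q hq => by simp only [mem_Icc, mem_Ico] at hq ⊢; omega) ?_
    intro q hq hq'
    simp only [mem_Icc, mem_Ico] at hq hq'
    obtain rfl : q = -N := by omega
    simp
  rw [hext, Int.sum_Ico_neg_self _ (by positivity), ← Int.sum_Ico_zero_natCast, mul_sum]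
  refine sum_le_sum fun q hq => ?_
  simp only [mem_Ico] at hq
  have hlow : |q - N| = N - q := by rw [abs_of_nonpos (by omega)]; ring
  rw [hlow, abs_of_nonneg hq.1]
  have hq0 : (0 : ℝ) ≤ q := by exact_mod_cast hq.1
  push_cast
  nlinarith [hg q hq.1]

theorem HasSum.subtype_ne_zero_of_even {M : Type*} [AddCommMonoid M] [TopologicalSpace M]
    [ContinuousAdd M] {f : ℤ → M} {s : M} (hf : f.Even) (h : HasSum (fun n : ℕ => f (n + 1)) s) :
    HasSum (fun k : {k : ℤ // k ≠ 0} => f k) (s + s) := by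
  have hpos : HasSum (fun n : ℕ => Set.indicator {k | k ≠ 0} f (n + 1)) s := by
    convert h using 2 with n
    exact Set.indicator_of_mem (by simp only [Set.mem_ofPred_eq]; omega) f
  have hneg : HasSum (fun n : ℕ => Set.indicator {k | k ≠ 0} f (-(n + 1))) s := by
    convert h using 2 with n
    rw [Set.indicator_of_mem (by simp only [Set.mem_ofPred_eq]; omega) f, hf]
  have hall := hpos.of_add_one_of_neg_add_one hneg
  rw [Set.indicator_of_notMem (by simp), add_zero] at hall
  exact hasSum_subtype_iff_indicator.mpr hall

noncomputable def windowCrossCorrBound (δ C : ℝ) (N : ℕ) (k : ℤ) : ℝ :=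
  (1 / N) * ∑ q ∈ Icc (-((N : ℤ) - 1)) ((N : ℤ) - 1), ((N : ℝ) - |q|) * C * δ ^ (-|q + k * N|)

-- `N` times the Fejér kernel `∑_{|q| < N} (1 - |q| / N) z^q`.
noncomputable def fejerSum (z : ℝ) (N : ℕ) : ℝ :=
  ∑ q ∈ Icc (-((N : ℤ) - 1)) ((N : ℤ) - 1), ((N : ℝ) - |q|) * z ^ q

theorem fejerSum_mul_sub_one_le {δ : ℝ} (hδ : 1 ≤ δ) (N : ℕ) :
    fejerSum δ N * (δ - 1) ≤ N * (δ ^ N - 1) := by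
  have h := sum_Icc_sub_abs_mul_le N (g := (δ ^ ·)) fun q _ => zpow_le_zpow_right₀ hδ (by omega)
  simp only [zpow_natCast] at h
  calc fejerSum δ N * (δ - 1) ≤ N * (∑ j ∈ range N, δ ^ j) * (δ - 1) :=
        mul_le_mul_of_nonneg_right h (by linarith)
    _ = N * (δ ^ N - 1) := by rw [mul_assoc, geom_sum_mul]

theorem windowCrossCorrBound_even (δ C : ℝ) (N : ℕ) : (windowCrossCorrBound δ C N).Even := by
  intro k
  unfold windowCrossCorrBound
  congr 1
  refine sum_nbij' Neg.neg Neg.neg ?_ ?_ ?_ ?_ fun q _ => ?_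
  · intro q hq; simp only [mem_Icc] at hq ⊢; omega
  · intro q hq; simp only [mem_Icc] at hq ⊢; omega
  · exact fun q _ => neg_neg q
  · exact fun q _ => neg_neg q
  · rw [abs_neg, ← abs_neg (-q + _)]
    ring_nf

theorem windowCrossCorrBound_neg_natCast {δ : ℝ} (hδ : δ ≠ 0) (C : ℝ) (N : ℕ) {k : ℕ}
    (hk : 0 < k) :
    windowCrossCorrBound δ C N (-k) = C / N * fejerSum δ N * (δ ^ N)⁻¹ ^ k := by
  rw [windowCrossCorrBound, fejerSum, mul_sum, mul_sum, sum_mul]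
  refine sum_congr rfl fun q hq => ?_
  simp only [mem_Icc] at hq
  have hkN : (N : ℤ) ≤ k * N := le_mul_of_one_le_left (by positivity) (by exact_mod_cast hk)
  have hexp : -|q + -k * N| = q + -((N * k : ℕ) : ℤ) := by
    rw [abs_of_neg (by rw [neg_mul]; omega)]
    push_cast
    ring
  rw [hexp, zpow_add₀ hδ, zpow_neg, zpow_natCast, pow_mul, inv_pow]
  ring

theorem hasSum_windowCrossCorrBound_succ {δ : ℝ} (hδ : 1 < δ) (C : ℝ) {N : ℕ} (hN : 0 < N) :
    HasSum (fun n : ℕ => windowCrossCorrBound δ C N (n + 1))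
      (C / N * fejerSum δ N / (δ ^ N - 1)) := by
  have hδN : 1 < δ ^ N := one_lt_pow₀ hδ hN.ne'
  have hgeom := (hasSum_geometric_of_lt_one (by positivity) (inv_lt_one_of_one_lt₀ hδN)).mul_left
    (C / N * fejerSum δ N * (δ ^ N)⁻¹)
  have hterm : (fun n : ℕ => windowCrossCorrBound δ C N (n + 1))
      = fun n => C / N * fejerSum δ N * (δ ^ N)⁻¹ * (δ ^ N)⁻¹ ^ n := by
    funext n
    rw [← windowCrossCorrBound_even, ← Nat.cast_succ,
      windowCrossCorrBound_neg_natCast (by positivity) _ _ n.succ_pos, pow_succ']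
    ring
  have hval : C / N * fejerSum δ N / (δ ^ N - 1)
      = C / N * fejerSum δ N * (δ ^ N)⁻¹ * (1 - (δ ^ N)⁻¹)⁻¹ := by
    have : δ ^ N - 1 ≠ 0 := by linarith
    field_simp
  rwa [hterm, hval]

theorem tsum_windowCrossCorrBound_succ_le {δ C : ℝ} (hδ : 1 < δ) (hC : 0 ≤ C) {N : ℕ}
    (hN : 0 < N) : ∑' n : ℕ, windowCrossCorrBound δ C N (n + 1) ≤ C / (δ - 1) := by
  have hδN : 1 < δ ^ N := one_lt_pow₀ hδ hN.ne'
  rw [(hasSum_windowCrossCorrBound_succ hδ C hN).tsum_eq,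
    div_le_div_iff₀ (by linarith) (by linarith)]
  calc C / N * fejerSum δ N * (δ - 1) = C / N * (fejerSum δ N * (δ - 1)) := by ring
    _ ≤ C / N * (N * (δ ^ N - 1)) :=
      mul_le_mul_of_nonneg_left (fejerSum_mul_sub_one_le hδ.le N) (by positivity)
    _ = C * (δ ^ N - 1) := by field_simp

theorem stmt_8 (δ C : ℝ) (hδ : 1 < δ) (hC : 0 < C) (N : ℕ) (hN : 0 < N)
    (B : ℤ → ℝ)
    (hB : ∀ k : ℤ, B k = (1 / N) * ∑ q ∈ Icc (-((N : ℤ) - 1)) ((N : ℤ) - 1),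
      ((N : ℝ) - |q|) * C * δ ^ (-|q + k * N|)) :
    Summable (fun k : {k : ℤ // k ≠ 0} => B k.val) ∧
    (∑' k : {k : ℤ // k ≠ 0}, B k.val) ≤ 2 * ∑' k : ℕ, B ((k : ℤ) + 1) ∧
    (∑' k : {k : ℤ // k ≠ 0}, B k.val) ≤ 2 * C / (δ - 1) := by
  obtain rfl : B = windowCrossCorrBound δ C N := funext hB
  have hpos := hasSum_windowCrossCorrBound_succ hδ C hN
  have hall := hpos.subtype_ne_zero_of_even (windowCrossCorrBound_even δ C N)
  have htsum : ∑' k : {k : ℤ // k ≠ 0}, windowCrossCorrBound δ C N k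
      = 2 * ∑' k : ℕ, windowCrossCorrBound δ C N (k + 1) := by
    rw [hall.tsum_eq, hpos.tsum_eq, two_mul]
  refine ⟨hall.summable, htsum.le, ?_⟩
  rw [htsum, mul_div_assoc]
  exact mul_le_mul_of_nonneg_left (tsum_windowCrossCorrBound_succ_le hδ hC.le hN) zero_le_two
end

section
/- Let Φ̂ be a 2×2-block Hermitian matrix [[Φ̂_i, Φ̂_{i,ī}],[Φ̂_{ī,i}, Φ̂_{ī}]] (Φ̂_i scalar) satisfying ‖Φ̂ − Φ‖₂ ≤ 1/(2U), where Φ is Hermitian with eigenvalues in [1/U, 1/L], 0 < L ≤ U. Let W = Φ_{ī}^{-1}Φ_{ī,i} (defined from the blocks of Φ). Then the residual variance E := Φ̂_i − Φ̂_{i,ī}W − W^HΦ̂_{ī,i} + W^HΦ̂_{ī}W satisfies E ≤ 1/L + (1 + ‖W‖₂²)·(1/(2U)) ≤ 3/(2L). -/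
/-!
With `u` the vector equal to `1` at `i` and to `-W` elsewhere, `E` is the quadratic form of
`Φhat` at `u`. Since `W` solves the normal equations `Φ_ī W = Φ_{ī,i}`, the form of `Φ` at `u`
is the Schur complement `Φ_i - W^H Φ_ī W ≤ Φ_i ≤ 1/L`, and replacing `Φ` by `Φhat` costs at most
`‖Φhat - Φ‖ ‖u‖² ≤ (1 + ‖W‖²)/(2U)`. Finally `‖u‖²/U ≤ u^H Φ u ≤ 1/L` gives the bound `3/(2L)`.
-/

open Matrix
open scoped Matrix.Norms.L2Operator ComplexOrder

variable {n : Type*} [DecidableEq n]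

section l2OpNorm

variable {𝕜 : Type*} [RCLike 𝕜] [Fintype n]

lemma re_star_dotProduct_mulVec_le_l2_opNorm (D : Matrix n n 𝕜) (u : n → 𝕜) :
    RCLike.re (star u ⬝ᵥ D *ᵥ u) ≤ ‖D‖ * ∑ k, ‖u k‖ ^ 2 := by
  have hinner : star u ⬝ᵥ D *ᵥ u = inner 𝕜 (WithLp.toLp 2 u) (WithLp.toLp 2 (D *ᵥ u)) := by
    rw [EuclideanSpace.inner_toLp_toLp, dotProduct_comm]
  calc RCLike.re (star u ⬝ᵥ D *ᵥ u)
      ≤ ‖WithLp.toLp 2 u‖ * ‖WithLp.toLp 2 (D *ᵥ u)‖ := hinner ▸ re_inner_le_norm _ _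
    _ ≤ ‖WithLp.toLp 2 u‖ * (‖D‖ * ‖WithLp.toLp 2 u‖) := by
        gcongr; exact D.l2_opNorm_mulVec (WithLp.toLp 2 u)
    _ = ‖D‖ * ∑ k, ‖u k‖ ^ 2 := by
        rw [← EuclideanSpace.norm_sq_eq]; ring

lemma re_star_dotProduct_mulVec_le_add_l2_opNorm_sub (M N : Matrix n n 𝕜) (u : n → 𝕜) :
    RCLike.re (star u ⬝ᵥ N *ᵥ u) ≤
      RCLike.re (star u ⬝ᵥ M *ᵥ u) + ‖N - M‖ * ∑ k, ‖u k‖ ^ 2 := by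
  have hsplit : star u ⬝ᵥ N *ᵥ u = star u ⬝ᵥ M *ᵥ u + star u ⬝ᵥ (N - M) *ᵥ u := by
    rw [← dotProduct_add, ← add_mulVec, add_sub_cancel]
  rw [hsplit, map_add]
  gcongr
  exact re_star_dotProduct_mulVec_le_l2_opNorm _ u

end l2OpNorm

def insertAt {R : Type*} (i : n) (c : R) (x : {j // j ≠ i} → R) : n → R :=
  fun j => if h : j = i then c else x ⟨j, h⟩

section insertAt

variable {R : Type*} (i : n) (c : R) (x : {j // j ≠ i} → R)

@[simp] lemma insertAt_self : insertAt i c x i = c := dif_pos rfl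

@[simp] lemma insertAt_val (a : {j // j ≠ i}) : insertAt i c x a = x a := dif_neg a.prop

lemma star_insertAt [Star R] : star (insertAt i c x) = insertAt i (star c) (star x) := by
  ext j
  by_cases h : j = i <;> simp [insertAt, h]

variable [Fintype n]

lemma sum_norm_sq_insertAt [Norm R] :
    ∑ k, ‖insertAt i c x k‖ ^ 2 = ‖c‖ ^ 2 + ∑ a, ‖x a‖ ^ 2 := by
  simp only [Fintype.sum_eq_add_sum_subtype_ne _ i, insertAt_self, insertAt_val]

lemma dotProduct_insertAt [NonUnitalNonAssocSemiring R] (v : n → R) :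
    v ⬝ᵥ insertAt i c x = v i * c + (fun a : {j // j ≠ i} => v a) ⬝ᵥ x := by
  simp only [dotProduct, Fintype.sum_eq_add_sum_subtype_ne _ i, insertAt_self, insertAt_val]

lemma insertAt_dotProduct [NonUnitalNonAssocSemiring R] (v : n → R) :
    insertAt i c x ⬝ᵥ v = c * v i + x ⬝ᵥ fun a : {j // j ≠ i} => v a := by
  simp only [dotProduct, Fintype.sum_eq_add_sum_subtype_ne _ i, insertAt_self, insertAt_val]

lemma insertAt_dotProduct_mulVec_insertAt [CommSemiring R] (M : Matrix n n R) (d : R)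
    (y : {j // j ≠ i} → R) :
    insertAt i c x ⬝ᵥ M *ᵥ insertAt i d y =
      c * M i i * d + c * ((fun a : {j // j ≠ i} => M i a) ⬝ᵥ y)
        + (x ⬝ᵥ fun a : {j // j ≠ i} => M a i) * d
        + x ⬝ᵥ M.submatrix Subtype.val Subtype.val *ᵥ y := by
  have hM : M *ᵥ insertAt i d y =
      fun k => M k i * d + (fun a : {j // j ≠ i} => M k a) ⬝ᵥ y := by
    ext k; exact dotProduct_insertAt i d y (M k)
  have hcol : (x ⬝ᵥ fun a : {j // j ≠ i} => M a i * d) = (x ⬝ᵥ fun a => M a i) * d := by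
    simp only [dotProduct, Finset.sum_mul, mul_assoc]
  have hsub : M.submatrix Subtype.val Subtype.val *ᵥ y =
      fun a : {j // j ≠ i} => (fun b : {j // j ≠ i} => M a b) ⬝ᵥ y := rfl
  rw [hM, insertAt_dotProduct, ← Pi.add_def, dotProduct_add, hcol, hsub]
  ring

end insertAt

variable [Fintype n]

lemma star_insertAt_one_neg_dotProduct_mulVec {R : Type*} [CommRing R] [StarRing R] (i : n)
    (M : Matrix n n R) (w : {j // j ≠ i} → R) :
    star (insertAt i 1 (-w)) ⬝ᵥ M *ᵥ insertAt i 1 (-w) =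
      M i i - (fun a : {j // j ≠ i} => M i a) ⬝ᵥ w - star w ⬝ᵥ (fun a : {j // j ≠ i} => M a i)
        + star w ⬝ᵥ M.submatrix Subtype.val Subtype.val *ᵥ w := by
  rw [star_insertAt, star_one, star_neg, insertAt_dotProduct_mulVec_insertAt]
  simp only [dotProduct_neg, neg_dotProduct, mulVec_neg, neg_neg, one_mul, mul_one]
  ring

/-- When `w` solves the normal equations, the last two terms of
`star_insertAt_one_neg_dotProduct_mulVec` cancel and the form is the Schur complement
`M i i - w^H M_ī w`. -/
lemma Matrix.PosSemidef.re_star_insertAt_one_neg_dotProduct_mulVec_le {𝕜 : Type*} [RCLike 𝕜]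
    {M : Matrix n n 𝕜} (hM : M.PosSemidef) {i : n} {w : {j // j ≠ i} → 𝕜}
    (hw : M.submatrix Subtype.val Subtype.val *ᵥ w = fun a : {j // j ≠ i} => M a i) :
    RCLike.re (star (insertAt i 1 (-w)) ⬝ᵥ M *ᵥ insertAt i 1 (-w)) ≤ RCLike.re (M i i) := by
  have hrow : (fun a : {j // j ≠ i} => M i a) ⬝ᵥ w =
      star (star w ⬝ᵥ fun a : {j // j ≠ i} => M a i) := by
    rw [← star_dotProduct]
    congr 1
    ext a
    exact (hM.1.apply i a).symm
  have hnonneg : 0 ≤ star w ⬝ᵥ M.submatrix Subtype.val Subtype.val *ᵥ w :=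
    (hM.submatrix Subtype.val).dotProduct_mulVec_nonneg w
  rw [star_insertAt_one_neg_dotProduct_mulVec, hw, sub_add_cancel, hrow, ← hw,
    map_sub, RCLike.star_def, RCLike.conj_re]
  linarith [(RCLike.nonneg_iff.mp hnonneg).1]

theorem stmt_16_general (p : ℕ) (L U : ℝ)
    (Φ Φhat : Matrix (Fin (p + 1)) (Fin (p + 1)) ℂ)
    (hΦ : Φ.PosDef)
    (hmin : ∀ v : Fin (p + 1) → ℂ, (1 / U) * ∑ k, ‖v k‖ ^ 2 ≤ (star v ⬝ᵥ Φ.mulVec v).re)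
    (hmax : ∀ v : Fin (p + 1) → ℂ, (star v ⬝ᵥ Φ.mulVec v).re ≤ (1 / L) * ∑ k, ‖v k‖ ^ 2)
    (hclose : ‖Φhat - Φ‖ ≤ 1 / (2 * U))
    (i : Fin (p + 1))
    (A : Matrix {j : Fin (p + 1) // j ≠ i} {j : Fin (p + 1) // j ≠ i} ℂ)
    (hA : A = Matrix.of fun a b => Φ a.val b.val)
    (W : {j : Fin (p + 1) // j ≠ i} → ℂ)
    (hW : W = A⁻¹.mulVec (fun a => Φ a.val i))
    (Ahat : Matrix {j : Fin (p + 1) // j ≠ i} {j : Fin (p + 1) // j ≠ i} ℂ)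
    (hAhat : Ahat = Matrix.of fun a b => Φhat a.val b.val)
    (E : ℝ)
    (hE : E = (Φhat i i - (fun a : {j : Fin (p + 1) // j ≠ i} => Φhat i a.val) ⬝ᵥ W
      - star W ⬝ᵥ (fun a : {j : Fin (p + 1) // j ≠ i} => Φhat a.val i)
      + star W ⬝ᵥ Ahat.mulVec W).re) :
    E ≤ 1 / L + (1 + ∑ a, ‖W a‖ ^ 2) * (1 / (2 * U)) ∧
    1 / L + (1 + ∑ a, ‖W a‖ ^ 2) * (1 / (2 * U)) ≤ 3 / (2 * L) := by
  set u := insertAt i 1 (-W)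
  have hnormal : Φ.submatrix Subtype.val Subtype.val *ᵥ W = fun a : {j // j ≠ i} => Φ a i := by
    have hApd : A.PosDef := hA ▸ hΦ.submatrix Subtype.val_injective
    rw [← show A = Φ.submatrix Subtype.val Subtype.val from hA, hW, mulVec_mulVec,
      mul_nonsing_inv _ ((isUnit_iff_isUnit_det _).mp hApd.isUnit), one_mulVec]
  have hnorm : ∑ k, ‖u k‖ ^ 2 = 1 + ∑ a, ‖W a‖ ^ 2 := by
    simp [u, sum_norm_sq_insertAt]
  have hdiag : (Φ i i).re ≤ 1 / L := by
    simpa [dotProduct_single_one, Pi.single_apply, apply_ite] using hmax (Pi.single i 1)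
  have hres : (star u ⬝ᵥ Φ *ᵥ u).re ≤ 1 / L :=
    (hΦ.posSemidef.re_star_insertAt_one_neg_dotProduct_mulVec_le hnormal).trans hdiag
  have hE_quad : E = (star u ⬝ᵥ Φhat *ᵥ u).re := by
    rw [hE, hAhat]
    exact congrArg Complex.re (star_insertAt_one_neg_dotProduct_mulVec i Φhat W).symm
  have hpert : (star u ⬝ᵥ Φhat *ᵥ u).re ≤
      (star u ⬝ᵥ Φ *ᵥ u).re + ‖Φhat - Φ‖ * ∑ k, ‖u k‖ ^ 2 :=
    re_star_dotProduct_mulVec_le_add_l2_opNorm_sub Φ Φhat u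
  have hpert_le : ‖Φhat - Φ‖ * ∑ k, ‖u k‖ ^ 2 ≤ (1 + ∑ a, ‖W a‖ ^ 2) * (1 / (2 * U)) := by
    rw [hnorm, mul_comm]; gcongr
  have hlow := hmin u
  rw [hnorm] at hlow
  have hhalf : (1 + ∑ a, ‖W a‖ ^ 2) * (1 / (2 * U)) = 1 / 2 * (1 / U * (1 + ∑ a, ‖W a‖ ^ 2)) := by
    ring
  have hthree : 3 / (2 * L) = 1 / L + 1 / 2 * (1 / L) := by ring
  constructor <;> linarith

theorem stmt_16 (p : ℕ) (L U : ℝ) (hL : 0 < L) (hLU : L ≤ U)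
    (Φ Φhat : Matrix (Fin (p + 1)) (Fin (p + 1)) ℂ)
    (hΦ : Φ.PosDef) (hΦhat : Φhat.IsHermitian)
    (hmin : ∀ v : Fin (p + 1) → ℂ, (1 / U) * ∑ k, ‖v k‖ ^ 2 ≤ (star v ⬝ᵥ Φ.mulVec v).re)
    (hmax : ∀ v : Fin (p + 1) → ℂ, (star v ⬝ᵥ Φ.mulVec v).re ≤ (1 / L) * ∑ k, ‖v k‖ ^ 2)
    (hclose : ‖Φhat - Φ‖ ≤ 1 / (2 * U))
    (i : Fin (p + 1))
    (A : Matrix {j : Fin (p + 1) // j ≠ i} {j : Fin (p + 1) // j ≠ i} ℂ)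
    (hA : A = Matrix.of fun a b => Φ a.val b.val)
    (W : {j : Fin (p + 1) // j ≠ i} → ℂ)
    (hW : W = A⁻¹.mulVec (fun a => Φ a.val i))
    (Ahat : Matrix {j : Fin (p + 1) // j ≠ i} {j : Fin (p + 1) // j ≠ i} ℂ)
    (hAhat : Ahat = Matrix.of fun a b => Φhat a.val b.val)
    (E : ℝ)
    (hE : E = (Φhat i i - (fun a : {j : Fin (p + 1) // j ≠ i} => Φhat i a.val) ⬝ᵥ W
      - star W ⬝ᵥ (fun a : {j : Fin (p + 1) // j ≠ i} => Φhat a.val i)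
      + star W ⬝ᵥ Ahat.mulVec W).re) :
    E ≤ 1 / L + (1 + ∑ a, ‖W a‖ ^ 2) * (1 / (2 * U)) ∧
    1 / L + (1 + ∑ a, ‖W a‖ ^ 2) * (1 / (2 * U)) ≤ 3 / (2 * L) :=
  stmt_16_general p L U Φ Φhat hΦ hmin hmax hclose i A hA W hW Ahat hAhat E hE
end
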